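/- arXiv:1205.4892 — 5 statements merged into one kernel-verified Lean document; each statement's English description precedes it below -/
import Mathlib

section
/- For all s1, s2 in the factorization semigroup S(G,O), one has s1·s2 = ρ(α(s1))(s2)·s1, where α is the product homomorphism and ρ is the simultaneous conjugation action. -/
/-- The defining relations of the factorization semigroup `S(G,O)`:
`x_{g₁} ⬝ x_{g₂} = x_{g₂} ⬝ x_{g₂⁻¹ g₁ g₂}`. -/
inductive FactRel (G : Type) [Group G] (O : Set G) :
    FreeSemigroup {g : G // g ∈ O} → FreeSemigroup {g : G // g ∈ O} → Prop
  | rel (g₁ g₂ : {g : G // g ∈ O}) (h : (g₂ : G)⁻¹ * g₁ * g₂ ∈ O) :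
      FactRel G O (FreeSemigroup.of g₁ * FreeSemigroup.of g₂)
        (FreeSemigroup.of g₂ * FreeSemigroup.of ⟨(g₂ : G)⁻¹ * g₁ * g₂, h⟩)

/-- The factorization semigroup `S(G,O)`. -/
def FactS (G : Type) [Group G] (O : Set G) :=
  (conGen (FactRel G O)).Quotient

instance (G : Type) [Group G] (O : Set G) : Semigroup (FactS G O) :=
  Con.semigroup _

/-- The generator `x_g` of `S(G,O)`. -/
def xg {G : Type} [Group G] {O : Set G} (g : {g : G // g ∈ O}) : FactS G O :=
  (conGen (FactRel G O)).toQuotient (FreeSemigroup.of g)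

/-! Since `S(G,O)` is generated by the `x_g`, and both sides of the identity are compatible with
products in `s₁` and in `s₂`, it suffices to check `x_g · x_b = x_{g b g⁻¹} · x_g`, which is the
defining relation read from right to left. -/

section Semigroup

variable {M G : Type*} [Semigroup M] [Group G]

theorem semiconjBy_mulAut_mul (ρ : G →* MulAut M) {g : G} {x a b : M}
    (ha : SemiconjBy x a (ρ g a)) (hb : SemiconjBy x b (ρ g b)) :
    SemiconjBy x (a * b) (ρ g (a * b)) := by
  simpa only [map_mul] using ha.mul_right hb

theorem semiconjBy_map_mul (α : M →ₙ* G) (ρ : G →* MulAut M) {a b t : M}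
    (ha : ∀ t, SemiconjBy a t (ρ (α a) t)) (hb : ∀ t, SemiconjBy b t (ρ (α b) t)) :
    SemiconjBy (a * b) t (ρ (α (a * b)) t) := by
  simpa only [map_mul, MulAut.mul_apply] using (ha _).mul_left (hb t)

end Semigroup

namespace FactS

variable {G : Type} [Group G] {O : Set G}

theorem induction_on {P : FactS G O → Prop} (s : FactS G O) (of : ∀ g, P (xg g))
    (mul : ∀ a b, P a → P b → P (a * b)) : P s := by
  induction s using Con.induction_on with
  | H w =>
    induction w using FreeSemigroup.recOnMul with
    | ih1 g => exact of g
    | ih2 g w _ ihw => exact mul _ _ (of g) ihw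

end FactS

variable {G : Type} [Group G] {O : Set G}

theorem xg_mul_xg (g₁ g₂ : {g : G // g ∈ O}) (h : (g₂ : G)⁻¹ * g₁ * g₂ ∈ O) :
    xg g₁ * xg g₂ = xg g₂ * xg ⟨(g₂ : G)⁻¹ * g₁ * g₂, h⟩ :=
  (Con.eq _).2 (ConGen.Rel.of _ _ (FactRel.rel g₁ g₂ h))

theorem xg_mul_xg_conj (hO : ∀ g ∈ O, ∀ h : G, h⁻¹ * g * h ∈ O) (g b : {g : G // g ∈ O})
    (hb : (g : G) * b * (g : G)⁻¹ ∈ O) :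
    xg g * xg b = xg ⟨(g : G) * b * (g : G)⁻¹, hb⟩ * xg g := by
  rw [xg_mul_xg _ g (hO _ hb g)]
  congr
  ext
  group

theorem stmt2 (G : Type) [Group G] (O : Set G)
    (hO : ∀ g ∈ O, ∀ h : G, h⁻¹ * g * h ∈ O)
    (α : FactS G O →ₙ* G) (hα : ∀ g : {g : G // g ∈ O}, α (xg g) = (g : G))
    (ρ : G →* MulAut (FactS G O))
    (hρ : ∀ (h : G) (g : G) (hg : g ∈ O),
      ρ h (xg ⟨g, hg⟩) = xg ⟨h * g * h⁻¹, by simpa using hO g hg h⁻¹⟩) :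
    ∀ s₁ s₂ : FactS G O, s₁ * s₂ = ρ (α s₁) s₂ * s₁ := by
  have xg_semiconjBy (g : {g : G // g ∈ O}) (t : FactS G O) :
      SemiconjBy (xg g) t (ρ (α (xg g)) t) := by
    rw [hα]
    induction t using FactS.induction_on with
    | of b => exact (hρ g b b.2).symm ▸ xg_mul_xg_conj hO g b _
    | mul a b ha hb => exact semiconjBy_mulAut_mul ρ ha hb
  intro s₁
  induction s₁ using FactS.induction_on with
  | of g => exact xg_semiconjBy g
  | mul a b ha hb => exact fun t => semiconjBy_map_mul α ρ ha hb
end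

section
/- If s ∈ S(G,O) satisfies that α(s) belongs to the center of the subgroup G_s generated by the factors of s, then for every g ∈ G_s the simultaneous conjugation ρ(g) fixes s. -/
/-- The element of `S(G,O)` given by the word `x_{g} ⬝ x_{g₁} ⬝ ... ⬝ x_{gₖ}`. -/
def wordOf {G : Type} [Group G] {O : Set G} (g : {g : G // g ∈ O})
    (gs : List {g : G // g ∈ O}) : FactS G O :=
  gs.foldl (fun s h => s * xg h) (xg g)

/-!
The Hurwitz moves give `v * u = ρ(α v) u * v`, in particular `x_c * u = ρ(c) u * x_c`: moving a
factor `x_c` of `s` to the front keeps its label, so each factor `c` of `s` gives `s = x_c * t`.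
By induction on `s`, `ρ(α s)` fixes `s`. If `α s` commutes with `c`, then `ρ(α s)` fixes `x_c` and
`ρ(α s) t = ρ(c) ρ(α t) t = ρ(c) t`, hence `ρ(c) s = x_c * ρ(c) t = ρ(α s) s = s`. The factors of
`s` generate `G_s`, so all of `G_s` fixes `s`.
-/

namespace FactS

variable {G : Type} [Group G] {O : Set G}

theorem xg_mul_xg {a b c : {g : G // g ∈ O}} (h : (b : G)⁻¹ * a * b = c) :
    xg a * xg b = xg b * xg c := by
  obtain ⟨c, hc⟩ := c
  dsimp only at h
  subst h
  exact (Con.eq _).mpr (ConGen.Rel.of _ _ (FactRel.rel a b hc))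

theorem wordOf_append_singleton (g : {g : G // g ∈ O}) (gs : List {g : G // g ∈ O})
    (k : {g : G // g ∈ O}) : wordOf g (gs ++ [k]) = wordOf g gs * xg k := by
  simp [wordOf, List.foldl_append]

theorem wordOf_eq_toQuotient (g : {g : G // g ∈ O}) (gs : List {g : G // g ∈ O}) :
    wordOf g gs = (conGen (FactRel G O)).toQuotient ⟨g, gs⟩ := by
  induction gs using List.reverseRecOn with
  | nil => rfl
  | append_singleton gs k ih =>
    rw [wordOf_append_singleton, ih]
    exact (Con.coe_mul (c := conGen (FactRel G O)) ⟨g, gs⟩ (FreeSemigroup.of k)).symm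

theorem exists_wordOf_eq (s : FactS G O) : ∃ g gs, wordOf g gs = s := by
  induction s using Con.induction_on with
  | H w => exact ⟨w.head, w.tail, wordOf_eq_toQuotient _ _⟩

@[elab_as_elim]
theorem induction_on_mul_xg {motive : FactS G O → Prop} (s : FactS G O)
    (of : ∀ g, motive (xg g)) (mul_of : ∀ y g, motive y → motive (y * xg g)) : motive s := by
  obtain ⟨g, gs, rfl⟩ := exists_wordOf_eq s
  induction gs using List.reverseRecOn with
  | nil => exact of g
  | append_singleton gs k ih => rw [wordOf_append_singleton]; exact mul_of _ k ih

/-- `ρ d x_a = x_{d a d⁻¹}`; that `d a d⁻¹ ∈ O` is part of the assertion. -/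
def ActsByConj (ρ : G →* MulAut (FactS G O)) : Prop :=
  ∀ (d : G) (a : {g : G // g ∈ O}),
    ∃ b : {g : G // g ∈ O}, (b : G) = d * a * d⁻¹ ∧ ρ d (xg a) = xg b

variable {ρ : G →* MulAut (FactS G O)} {α : FactS G O →ₙ* G}

theorem ActsByConj.map_xg_of_eq (hρ : ActsByConj ρ) {d : G} {a c : {g : G // g ∈ O}}
    (h : d * a * d⁻¹ = c) : ρ d (xg a) = xg c := by
  obtain ⟨b, hb, hab⟩ := hρ d a
  rw [hab, Subtype.ext (hb.trans h)]

theorem ActsByConj.map_xg_self (hρ : ActsByConj ρ) (k : {g : G // g ∈ O}) :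
    ρ k (xg k) = xg k :=
  hρ.map_xg_of_eq (mul_inv_cancel_right _ _)

theorem ActsByConj.xg_mul (hρ : ActsByConj ρ) (k : {g : G // g ∈ O}) (u : FactS G O) :
    xg k * u = ρ k u * xg k := by
  have hgen (g : {g : G // g ∈ O}) : xg k * xg g = ρ k (xg g) * xg k := by
    obtain ⟨b, hb, hgb⟩ := hρ k g
    rw [hgb]
    exact (xg_mul_xg (by rw [hb]; group)).symm
  induction u using induction_on_mul_xg with
  | of g => exact hgen g
  | mul_of y g ih => rw [← mul_assoc, ih, mul_assoc, hgen, ← mul_assoc, map_mul]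

theorem ActsByConj.mul_eq_map_alpha_mul (hρ : ActsByConj ρ)
    (hα : ∀ g : {g : G // g ∈ O}, α (xg g) = g) (v u : FactS G O) :
    v * u = ρ (α v) u * v := by
  induction v using induction_on_mul_xg generalizing u with
  | of k => rw [hα, hρ.xg_mul]
  | mul_of y k ih =>
    rw [mul_assoc, hρ.xg_mul, ← mul_assoc, ih, mul_assoc, map_mul α, hα, map_mul,
      MulAut.mul_apply]

theorem ActsByConj.map_alpha_self (hρ : ActsByConj ρ)
    (hα : ∀ g : {g : G // g ∈ O}, α (xg g) = g) (s : FactS G O) : ρ (α s) s = s := by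
  induction s using induction_on_mul_xg with
  | of k => rw [hα, hρ.map_xg_self]
  | mul_of y k ih =>
    calc ρ (α (y * xg k)) (y * xg k) = ρ (α y) (ρ k (y * xg k)) := by
          rw [map_mul α, hα, map_mul ρ, MulAut.mul_apply]
      _ = ρ (α y) (xg k * y) := by rw [hρ.xg_mul, map_mul, hρ.map_xg_self]
      _ = y * xg k := by rw [map_mul, ih, ← hρ.mul_eq_map_alpha_mul hα]

theorem ActsByConj.map_eq_self_of_commute (hρ : ActsByConj ρ)
    (hα : ∀ g : {g : G // g ∈ O}, α (xg g) = g) {s : FactS G O} {c : {g : G // g ∈ O}}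
    (hs : s = xg c ∨ ∃ t, s = xg c * t) (hc : Commute (α s) c) : ρ c s = s := by
  have hfix : ρ (α s) (xg c) = xg c := hρ.map_xg_of_eq (by rw [hc.eq, mul_inv_cancel_right])
  rcases hs with rfl | ⟨t, rfl⟩
  · exact hρ.map_xg_self c
  · have ht : ρ c t = ρ (α (xg c * t)) t := by
      rw [map_mul α, hα, map_mul, MulAut.mul_apply, hρ.map_alpha_self hα]
    calc ρ c (xg c * t) = ρ (α (xg c * t)) (xg c) * ρ (α (xg c * t)) t := by
          rw [map_mul, hρ.map_xg_self, hfix, ht]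
      _ = xg c * t := by rw [← map_mul, hρ.map_alpha_self hα]

theorem ActsByConj.eq_xg_mul_of_mem (hρ : ActsByConj ρ) {g c : {g : G // g ∈ O}}
    {gs : List {g : G // g ∈ O}} (hc : c ∈ g :: gs) :
    wordOf g gs = xg c ∨ ∃ t, wordOf g gs = xg c * t := by
  induction gs using List.reverseRecOn with
  | nil => exact .inl (by rw [List.mem_singleton.mp hc]; rfl)
  | append_singleton gs k ih =>
    rw [wordOf_append_singleton]
    have hc' : c ∈ g :: gs ∨ c = k := by simpa [or_assoc] using hc
    rcases hc' with hc | rfl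
    · rcases ih hc with h | ⟨t, h⟩
      · exact .inr ⟨xg k, by rw [h]⟩
      · exact .inr ⟨t * xg k, by rw [h, mul_assoc]⟩
    · exact .inr ⟨ρ (c : G)⁻¹ (wordOf g gs), by rw [hρ.xg_mul, map_inv, MulAut.apply_inv_self]⟩

end FactS

open FactS

theorem stmt7 (G : Type) [Group G] (O : Set G)
    (hO : ∀ g ∈ O, ∀ h : G, h⁻¹ * g * h ∈ O)
    (α : FactS G O →ₙ* G) (hα : ∀ g : {g : G // g ∈ O}, α (xg g) = (g : G))
    (ρ : G →* MulAut (FactS G O))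
    (hρ : ∀ (h : G) (g : G) (hg : g ∈ O),
      ρ h (xg ⟨g, hg⟩) = xg ⟨h * g * h⁻¹, by simpa using hO g hg h⁻¹⟩)
    (Gs : FactS G O → Subgroup G)
    (hGs : ∀ (g : {g : G // g ∈ O}) (gs : List {g : G // g ∈ O}),
      Gs (wordOf g gs) = Subgroup.closure {a : G | a ∈ (g :: gs).map Subtype.val}) :
    ∀ s : FactS G O, α s ∈ Gs s → α s ∈ Subgroup.centralizer ((Gs s : Subgroup G) : Set G) →
      ∀ g ∈ Gs s, ρ g s = s := by
  have hconj : ActsByConj ρ := fun d a => ⟨_, rfl, hρ d a a.2⟩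
  intro s _ hcent g hg
  obtain ⟨a, as, rfl⟩ := exists_wordOf_eq s
  suffices Gs (wordOf a as) ≤
      (MulAction.stabilizer _ (wordOf a as)).comap ((MulAut.toPerm _).comp ρ) from this hg
  rw [hGs, Subgroup.closure_le]
  intro _ hx
  obtain ⟨c, hc, rfl⟩ := List.mem_map.mp hx
  have hcGs : (c : G) ∈ Gs (wordOf a as) := hGs a as ▸ Subgroup.subset_closure hx
  exact hconj.map_eq_self_of_commute hα (hconj.eq_xg_mul_of_mem hc)
    (Subgroup.mem_centralizer_iff.mp hcent _ hcGs).symm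
end

section
/- In the strong covering semigroup 𝕊(G,O), the map α defined on generators by α(x_g) = g and α(y_{a,b}) = [a,b] = aba^{-1}b^{-1} extends to a well-defined semigroup homomorphism 𝕊(G,O) → G, i.e., it respects all five defining relations. -/
/-- Conjugation `g^k = k⁻¹ g k`. -/
def cnj {G : Type} [Group G] (k g : G) : G := k⁻¹ * g * k

/-- Commutator `[a,b] = a b a⁻¹ b⁻¹`. -/
def cmm {G : Type} [Group G] (a b : G) : G := a * b * a⁻¹ * b⁻¹

/-- The defining relations of the strong covering semigroup `𝕊(G,O)`, on the
generators `x_g` (`g ∈ O`, encoded by `Sum.inl`) and `y_{a,b}` (`a,b ∈ G`,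
encoded by `Sum.inr`). -/
inductive CovRel (G : Type) [Group G] (O : Set G) :
    FreeSemigroup ({g : G // g ∈ O} ⊕ G × G) →
    FreeSemigroup ({g : G // g ∈ O} ⊕ G × G) → Prop
  | rel1 (g₁ g₂ : {g : G // g ∈ O}) (h : cnj (g₂ : G) g₁ ∈ O) :
      CovRel G O (FreeSemigroup.of (.inl g₁) * FreeSemigroup.of (.inl g₂))
        (FreeSemigroup.of (.inl g₂) * FreeSemigroup.of (.inl ⟨cnj (g₂ : G) g₁, h⟩))
  | rel2 (g : {g : G // g ∈ O}) (a b : G) (h : cnj (cmm a b) g ∈ O) :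
      CovRel G O (FreeSemigroup.of (.inl g) * FreeSemigroup.of (.inr (a, b)))
        (FreeSemigroup.of (.inr (a, b)) *
          FreeSemigroup.of (.inl ⟨cnj (cmm a b) g, h⟩))
  | rel3 (g : {g : G // g ∈ O}) (a b : G)
      (h : cnj (a * b⁻¹ * a⁻¹ * (g : G)⁻¹) g ∈ O) :
      CovRel G O (FreeSemigroup.of (.inl g) * FreeSemigroup.of (.inr (a, b)))
        (FreeSemigroup.of (.inl ⟨cnj (a * b⁻¹ * a⁻¹ * (g : G)⁻¹) g, h⟩) *
          FreeSemigroup.of (.inr ((g : G) * a, b)))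
  | rel4 (g : {g : G // g ∈ O}) (a b : G)
      (h : cnj (b * a⁻¹ * b⁻¹ * (g : G)) g ∈ O) :
      CovRel G O (FreeSemigroup.of (.inr (a, b)) * FreeSemigroup.of (.inl g))
        (FreeSemigroup.of (.inr (a, (g : G)⁻¹ * b)) *
          FreeSemigroup.of (.inl ⟨cnj (b * a⁻¹ * b⁻¹ * (g : G)) g, h⟩))
  | rel5 (g : {g : G // g ∈ O}) (a b : G) (h : cnj (cmm a b) g ∈ O) :
      CovRel G O (FreeSemigroup.of (.inl g) * FreeSemigroup.of (.inr (a, b)))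
        (FreeSemigroup.of (.inl ⟨cnj (cmm a b) g, h⟩) *
          FreeSemigroup.of
            (.inr (cnj (cnj (cmm a b) g) a, cnj (cnj (cmm a b) g) b)))

/-- The strong covering semigroup `𝕊(G,O)`. -/
def CovS (G : Type) [Group G] (O : Set G) :=
  (conGen (CovRel G O)).Quotient

instance (G : Type) [Group G] (O : Set G) : Semigroup (CovS G O) :=
  Con.semigroup _

/-- The generator `x_g` of `𝕊(G,O)`. -/
def Xg {G : Type} [Group G] {O : Set G} (g : {g : G // g ∈ O}) : CovS G O :=
  (conGen (CovRel G O)).toQuotient (FreeSemigroup.of (.inl g))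

/-- The generator `y_{a,b}` of `𝕊(G,O)`. -/
def Yg {G : Type} [Group G] {O : Set G} (a b : G) : CovS G O :=
  (conGen (CovRel G O)).toQuotient (FreeSemigroup.of (.inr (a, b)))

/-! Under `x_g ↦ g`, `y_{a,b} ↦ [a,b]` each defining relation becomes an identity in the free
group on the letters involved, so the lift of this assignment to the free semigroup factors
through the congruence the relations generate. -/

namespace Con

variable {M N : Type*} [Mul M] [Mul N]

def liftMulHom (c : Con M) (f : M →ₙ* N) (H : c ≤ ker f) : c.Quotient →ₙ* N where
  toFun q := Con.liftOn q f fun _ _ h => H h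
  map_mul' p q := Con.induction_on₂ p q (map_mul f)

end Con

namespace CovS

variable {G : Type} [Group G] {O : Set G}

def commutatorLift (O : Set G) : FreeSemigroup ({g : G // g ∈ O} ⊕ G × G) →ₙ* G :=
  FreeSemigroup.lift (Sum.elim Subtype.val fun p => cmm p.1 p.2)

theorem commutatorLift_eq_of_covRel {x y : FreeSemigroup ({g : G // g ∈ O} ⊕ G × G)}
    (h : CovRel G O x y) : commutatorLift O x = commutatorLift O y := by
  cases h <;>
  · simp only [commutatorLift, map_mul, FreeSemigroup.lift_of, Sum.elim_inl, Sum.elim_inr,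
      cnj, cmm]
    group

def commutatorMap (O : Set G) : CovS G O →ₙ* G :=
  (conGen (CovRel G O)).liftMulHom (commutatorLift O)
    (Con.conGen_le.mpr fun _ _ h => (Con.ker_rel _).mpr (commutatorLift_eq_of_covRel h))

theorem commutatorMap_Xg (g : {g : G // g ∈ O}) : commutatorMap O (Xg g) = g :=
  FreeSemigroup.lift_of _ _

theorem commutatorMap_Yg (a b : G) : commutatorMap O (Yg a b) = a * b * a⁻¹ * b⁻¹ :=
  FreeSemigroup.lift_of _ _

end CovS

theorem stmt13_general (G : Type) [Group G] (O : Set G) :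
    ∃ α : CovS G O →ₙ* G,
      (∀ g : {g : G // g ∈ O}, α (Xg g) = (g : G)) ∧
      ∀ a b : G, α (Yg a b) = a * b * a⁻¹ * b⁻¹ :=
  ⟨CovS.commutatorMap O, CovS.commutatorMap_Xg, CovS.commutatorMap_Yg⟩

theorem stmt13 (G : Type) [Group G] (O : Set G) (h1 : (1 : G) ∉ O)
    (hO : ∀ g ∈ O, ∀ h : G, h⁻¹ * g * h ∈ O) :
    ∃ α : CovS G O →ₙ* G,
      (∀ g : {g : G // g ∈ O}, α (Xg g) = (g : G)) ∧
      ∀ a b : G, α (Yg a b) = a * b * a⁻¹ * b⁻¹ :=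
  stmt13_general G O
end

section
/- In the strong covering semigroup 𝕊(G,O), relation (5) x_g·y_{a,b} = x_{g^{[a,b]}}·y_{a^{g^{[a,b]}}, b^{g^{[a,b]}}} is a consequence of relations (2), (3), and (4). -/
/-- Relations (2), (3), (4) of the strong covering semigroup, on the
generators `x_g` (`g ∈ O`, encoded by `Sum.inl`) and `y_{a,b}` (`a,b ∈ G`,
encoded by `Sum.inr`). -/
inductive CovRel' (G : Type) [Group G] (O : Set G) :
    FreeSemigroup ({g : G // g ∈ O} ⊕ G × G) →
    FreeSemigroup ({g : G // g ∈ O} ⊕ G × G) → Prop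
  | rel2 (g : {g : G // g ∈ O}) (a b : G) (h : cnj (cmm a b) g ∈ O) :
      CovRel' G O (FreeSemigroup.of (.inl g) * FreeSemigroup.of (.inr (a, b)))
        (FreeSemigroup.of (.inr (a, b)) *
          FreeSemigroup.of (.inl ⟨cnj (cmm a b) g, h⟩))
  | rel3 (g : {g : G // g ∈ O}) (a b : G)
      (h : cnj (a * b⁻¹ * a⁻¹ * (g : G)⁻¹) g ∈ O) :
      CovRel' G O (FreeSemigroup.of (.inl g) * FreeSemigroup.of (.inr (a, b)))
        (FreeSemigroup.of (.inl ⟨cnj (a * b⁻¹ * a⁻¹ * (g : G)⁻¹) g, h⟩) *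
          FreeSemigroup.of (.inr ((g : G) * a, b)))
  | rel4 (g : {g : G // g ∈ O}) (a b : G)
      (h : cnj (b * a⁻¹ * b⁻¹ * (g : G)) g ∈ O) :
      CovRel' G O (FreeSemigroup.of (.inr (a, b)) * FreeSemigroup.of (.inl g))
        (FreeSemigroup.of (.inr (a, (g : G)⁻¹ * b)) *
          FreeSemigroup.of (.inl ⟨cnj (b * a⁻¹ * b⁻¹ * (g : G)) g, h⟩))

/-- The semigroup presented by the generators of `𝕊(G,O)` and the relations
(2), (3), (4) only. -/
def CovS' (G : Type) [Group G] (O : Set G) :=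
  (conGen (CovRel' G O)).Quotient

instance (G : Type) [Group G] (O : Set G) : Semigroup (CovS' G O) :=
  Con.semigroup _

/-- The generator `x_g`. -/
def Xg' {G : Type} [Group G] {O : Set G} (g : {g : G // g ∈ O}) : CovS' G O :=
  (conGen (CovRel' G O)).toQuotient (FreeSemigroup.of (.inl g))

/-- The generator `y_{a,b}`. -/
def Yg' {G : Type} [Group G] {O : Set G} (a b : G) : CovS' G O :=
  (conGen (CovRel' G O)).toQuotient (FreeSemigroup.of (.inr (a, b)))

/-! Combining (3) with (2) gives `x_k y_{a,b} = y_{ka,b} x_{b k b⁻¹}`. Together with (4) and (2)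
read backwards, this shows `y_{a,b} x_k = x_k y_{a^k,b^k}`: the generators `x_k` act on the `y`'s
by conjugation. Relation (5) is (2) followed by this identity for `k = g^{[a,b]}`. -/

namespace CovS'

variable {G : Type} [Group G] {O : Set G}

theorem Xg'_mul_Yg'_eq_Yg'_mul_Xg' {g k : G} (hg : g ∈ O) (hk : k ∈ O) {a b : G}
    (hgk : k = cnj (cmm a b) g) :
    Xg' ⟨g, hg⟩ * Yg' a b = Yg' a b * Xg' ⟨k, hk⟩ := by
  subst hgk
  exact (Con.eq _).mpr (.of _ _ (.rel2 _ a b hk))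

theorem Xg'_mul_Yg'_eq_Xg'_mul_Yg' {g k : G} (hg : g ∈ O) (hk : k ∈ O) {a b a' : G}
    (hgk : k = cnj (a * b⁻¹ * a⁻¹ * g⁻¹) g) (ha' : a' = g * a) :
    Xg' ⟨g, hg⟩ * Yg' a b = Xg' ⟨k, hk⟩ * Yg' a' b := by
  subst hgk ha'
  exact (Con.eq _).mpr (.of _ _ (.rel3 _ a b hk))

theorem Yg'_mul_Xg'_eq_Yg'_mul_Xg' {g k : G} (hg : g ∈ O) (hk : k ∈ O) {a b b' : G}
    (hgk : k = cnj (b * a⁻¹ * b⁻¹ * g) g) (hb' : b' = g⁻¹ * b) :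
    Yg' a b * Xg' ⟨g, hg⟩ = Yg' a b' * Xg' ⟨k, hk⟩ := by
  subst hgk hb'
  exact (Con.eq _).mpr (.of _ _ (.rel4 _ a b hk))

variable (hO : ∀ g ∈ O, ∀ h : G, h⁻¹ * g * h ∈ O)
include hO

theorem Xg'_mul_Yg'_eq_Yg'_mul_Xg'_conj {k k' : G} (hk : k ∈ O) (hk' : k' ∈ O) {a b a' : G}
    (hkk' : k' = b * k * b⁻¹) (ha' : a' = k * a) :
    Xg' ⟨k, hk⟩ * Yg' a b = Yg' a' b * Xg' ⟨k', hk'⟩ := by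
  rw [Xg'_mul_Yg'_eq_Xg'_mul_Yg' hk (hO _ hk (a * b⁻¹ * a⁻¹ * k⁻¹)) rfl ha']
  exact Xg'_mul_Yg'_eq_Yg'_mul_Xg' _ _ (by simp only [hkk', ha', cnj, cmm]; group)

theorem Yg'_mul_Xg'_eq_Xg'_mul_Yg'_cnj {k : G} (hk : k ∈ O) (a b : G) :
    Yg' a b * Xg' ⟨k, hk⟩ = Xg' ⟨k, hk⟩ * Yg' (cnj k a) (cnj k b) := by
  calc Yg' a b * Xg' ⟨k, hk⟩
      = Yg' a (k⁻¹ * b) * Xg' ⟨_, hO _ hk (b * a⁻¹ * b⁻¹ * k)⟩ :=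
        Yg'_mul_Xg'_eq_Yg'_mul_Xg' _ _ rfl rfl
    _ = Xg' ⟨_, hO _ hk a⁻¹⟩ * Yg' a (k⁻¹ * b) :=
        (Xg'_mul_Yg'_eq_Yg'_mul_Xg' _ _ (by simp only [cnj, cmm]; group)).symm
    _ = Yg' (a * k) (k⁻¹ * b) * Xg' ⟨_, hO _ hk (a⁻¹ * b⁻¹ * k)⟩ :=
        Xg'_mul_Yg'_eq_Yg'_mul_Xg'_conj hO _ _ (by group) (by group)
    _ = Yg' (a * k) (cnj k b) * Xg' ⟨_, hO _ hk (k⁻¹ * b⁻¹ * k)⟩ :=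
        (Yg'_mul_Xg'_eq_Yg'_mul_Xg' _ _ (by simp only [cnj]; group)
          (by simp only [cnj]; group)).symm
    _ = Xg' ⟨k, hk⟩ * Yg' (cnj k a) (cnj k b) :=
        (Xg'_mul_Yg'_eq_Yg'_mul_Xg'_conj hO _ _ (by simp only [cnj]; group)
          (by simp only [cnj]; group)).symm

end CovS'

theorem stmt14_general (G : Type) [Group G] (O : Set G)
    (hO : ∀ g ∈ O, ∀ h : G, h⁻¹ * g * h ∈ O) :
    ∀ (g : G) (hg : g ∈ O) (a b : G),
      Xg' ⟨g, hg⟩ * Yg' a b =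
        Xg' (⟨cnj (cmm a b) g, hO g hg (cmm a b)⟩ : {g : G // g ∈ O}) *
          Yg' (cnj (cnj (cmm a b) g) a) (cnj (cnj (cmm a b) g) b) := by
  intro g hg a b
  rw [CovS'.Xg'_mul_Yg'_eq_Yg'_mul_Xg' hg (hO g hg (cmm a b)) rfl]
  exact CovS'.Yg'_mul_Xg'_eq_Xg'_mul_Yg'_cnj hO _ a b

/-- Relation (5) is a consequence of relations (2), (3), (4). -/
theorem stmt14 (G : Type) [Group G] (O : Set G) (h1 : (1 : G) ∉ O)
    (hO : ∀ g ∈ O, ∀ h : G, h⁻¹ * g * h ∈ O) :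
    ∀ (g : G) (hg : g ∈ O) (a b : G),
      Xg' ⟨g, hg⟩ * Yg' a b =
        Xg' (⟨cnj (cmm a b) g, hO g hg (cmm a b)⟩ : {g : G // g ∈ O}) *
          Yg' (cnj (cnj (cmm a b) g) a) (cnj (cnj (cmm a b) g) b) :=
  stmt14_general G O hO
end

section
/- For any finite subset O of a group G, any g1,...,gn ∈ O, a1,b1,...,ak,bk ∈ G, any g ∈ O, any h in the subgroup generated by g1,...,gn,a1,b1,...,ak,bk, and any s ∈ S(G,O) with α(s) = g^{-1}, the equation x_{g1}·...·x_{gn}·x_g·s·y_{a1,b1}·...·y_{ak,bk} = x_{g1}·...·x_{gn}·x_{h^{-1}gh}·z·y_{a1,b1}·...·y_{ak,bk} has a solution z ∈ S(G,O) in the strong covering semigroup 𝕊(G,O). -/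
theorem exists_pow_conj_eq_conj_inv {G : Type*} [Group G] {O : Set G} (hOfin : O.Finite)
    (hO : ∀ g ∈ O, ∀ h : G, h⁻¹ * g * h ∈ O) (h : G) :
    ∃ n : ℕ, ∀ x ∈ O, (h ^ n)⁻¹ * x * h ^ n = h * x * h⁻¹ := by
  have := hOfin.to_subtype
  -- `σ ^ orderOf σ = 1`, so `h ^ (orderOf σ - 1)` acts on `O` as `h⁻¹` does
  let σ : Equiv.Perm O :=
    { toFun := fun x => ⟨h⁻¹ * x * h, hO x x.2 h⟩
      invFun := fun x => ⟨h * x * h⁻¹, by simpa using hO x x.2 h⁻¹⟩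
      left_inv := fun x => Subtype.ext (by group)
      right_inv := fun x => Subtype.ext (by group) }
  have hσ (k : ℕ) (x : O) : ((σ ^ k) x : G) = (h ^ k)⁻¹ * x * h ^ k := by
    induction k generalizing x with
    | zero => simp
    | succ k ih =>
      rw [pow_succ, Equiv.Perm.mul_apply, ih]
      simp only [σ, Equiv.coe_fn_mk, pow_succ]
      group
  refine ⟨orderOf σ - 1, fun x hx => ?_⟩
  have hfix := hσ (orderOf σ) ⟨x, hx⟩
  rw [pow_orderOf_eq_one, Equiv.Perm.one_apply] at hfix
  rw [← pow_sub_one_mul (orderOf_pos σ).ne' h] at hfix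
  calc (h ^ (orderOf σ - 1))⁻¹ * x * h ^ (orderOf σ - 1)
      = h * ((h ^ (orderOf σ - 1) * h)⁻¹ * x * (h ^ (orderOf σ - 1) * h)) * h⁻¹ := by group
    _ = h * x * h⁻¹ := by rw [← hfix]

section CentralFactor

variable {M : Type*} [Semigroup M]

theorem WithOne.coe_foldr_mul {ι : Type*} (f : ι → M) (l : List ι) (b : M) :
    ((l.foldr (fun i acc => f i * acc) b : M) : WithOne M) =
      (l.map fun i => (f i : WithOne M)).prod * b := by
  induction l with
  | nil => simp
  | cons i l ih => simp [ih, mul_assoc]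

theorem WithOne.coe_foldl_mul {ι : Type*} (f : ι → M) (l : List ι) (b : M) :
    ((l.foldl (fun acc i => acc * f i) b : M) : WithOne M) =
      b * (l.map fun i => (f i : WithOne M)).prod := by
  induction l generalizing b with
  | nil => simp
  | cons i l ih => simp [ih, mul_assoc]

theorem WithOne.commute_coe {B : M} (hB : ∀ x, Commute B x) (y : WithOne M) :
    Commute (B : WithOne M) y := by
  induction y using WithOne.recOneCoe with
  | one => exact Commute.one_right _
  | coe x => exact (hB x).map WithOne.coeMulHom

theorem WithOne.coe_mul_prod_eq_of_mem {B B' d : M} (hB : ∀ x, Commute B x)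
    (hB' : ∀ x, Commute B' x) (h : B * d = B' * d) {L : List (WithOne M)}
    (hd : (d : WithOne M) ∈ L) : (B : WithOne M) * L.prod = B' * L.prod := by
  obtain ⟨l₁, l₂, rfl⟩ := List.append_of_mem hd
  have absorb {C : M} (hC : ∀ x, Commute C x) :
      (C : WithOne M) * (l₁ ++ (d : WithOne M) :: l₂).prod = l₁.prod * (↑(C * d) * l₂.prod) := by
    rw [List.prod_append, List.prod_cons, ← mul_assoc, (commute_coe hC _).eq, mul_assoc,
      ← mul_assoc (C : WithOne M), coe_mul]
  rw [absorb hB, absorb hB', h]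

theorem foldr_foldl_eq_of_mul_eq {ι κ : Type*} (f : ι → M) (g : κ → M) (l : List ι)
    (l' : List κ) {B B' d : M} (hB : ∀ x, Commute B x) (hB' : ∀ x, Commute B' x)
    (h : B * d = B' * d) (hd : d ∈ l.map f ++ l'.map g) :
    l.foldr (fun i acc => f i * acc) (l'.foldl (fun acc j => acc * g j) B) =
      l.foldr (fun i acc => f i * acc) (l'.foldl (fun acc j => acc * g j) B') := by
  apply WithOne.coe_injective
  have hL := WithOne.coe_mul_prod_eq_of_mem hB hB' h (List.mem_map_of_mem (f := WithOne.coe) hd)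
  simp only [List.map_append, List.map_map, List.prod_append] at hL
  rw [WithOne.coe_foldr_mul, WithOne.coe_foldl_mul, WithOne.coe_foldr_mul,
    WithOne.coe_foldl_mul, ← mul_assoc, ← (WithOne.commute_coe hB _).eq, ← mul_assoc,
    ← (WithOne.commute_coe hB' _).eq]
  simpa only [Function.comp_def, mul_assoc] using hL

end CentralFactor

namespace CovS

variable {G : Type} [Group G] {O : Set G}

theorem Xg_congr {x y : G} {hx : x ∈ O} {hy : y ∈ O} (h : x = y) : Xg ⟨x, hx⟩ = Xg ⟨y, hy⟩ := by
  subst h; rfl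

@[elab_as_elim]
theorem induction_on {p : CovS G O → Prop} (t : CovS G O) (hx : ∀ m, p (Xg m))
    (hy : ∀ a b, p (Yg a b)) (hmul : ∀ t t', p t → p t' → p (t * t')) : p t := by
  induction t using Con.induction_on with
  | _ w =>
    induction w using FreeSemigroup.recOnMul with
    | ih1 l => rcases l with m | ⟨a, b⟩; exacts [hx m, hy a b]
    | ih2 x y ihx ihy => exact hmul _ _ ihx ihy

theorem toQuotient_eq_of_covRel {w w'} (h : CovRel G O w w') :
    ((conGen (CovRel G O)).toQuotient w : CovS G O) = (conGen (CovRel G O)).toQuotient w' :=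
  (Con.eq _).2 (ConGen.Rel.of _ _ h)

abbrev S (G : Type) [Group G] (O : Set G) : Subsemigroup (CovS G O) :=
  Subsemigroup.closure (Set.range Xg)

theorem Xg_mem (m : {g : G // g ∈ O}) : Xg m ∈ S G O :=
  Subsemigroup.subset_closure ⟨m, rfl⟩

section Relations

variable (hO : ∀ g ∈ O, ∀ h : G, h⁻¹ * g * h ∈ O)
include hO

theorem rel1 (m c : {g : G // g ∈ O}) :
    Xg m * Xg c = Xg c * Xg ⟨(c : G)⁻¹ * m * c, hO m m.2 c⟩ :=
  toQuotient_eq_of_covRel (.rel1 m c _)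

theorem rel2 (m : {g : G // g ∈ O}) (a b : G) :
    Xg m * Yg a b = Yg a b * Xg ⟨(cmm a b)⁻¹ * m * cmm a b, hO m m.2 _⟩ :=
  toQuotient_eq_of_covRel (.rel2 m a b _)

theorem rel3 (m : {g : G // g ∈ O}) (a b : G) :
    Xg m * Yg a b = Xg ⟨(a * b⁻¹ * a⁻¹ * (m : G)⁻¹)⁻¹ * m * (a * b⁻¹ * a⁻¹ * (m : G)⁻¹),
      hO m m.2 _⟩ * Yg (m * a) b :=
  toQuotient_eq_of_covRel (.rel3 m a b _)

theorem rel4 (m : {g : G // g ∈ O}) (a b : G) :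
    Yg a b * Xg m = Yg a ((m : G)⁻¹ * b) *
      Xg ⟨(b * a⁻¹ * b⁻¹ * m)⁻¹ * m * (b * a⁻¹ * b⁻¹ * m), hO m m.2 _⟩ :=
  toQuotient_eq_of_covRel (.rel4 m a b _)

theorem rel5 (m : {g : G // g ∈ O}) (a b : G) :
    Xg m * Yg a b = Xg ⟨(cmm a b)⁻¹ * m * cmm a b, hO m m.2 _⟩ *
      Yg (((cmm a b)⁻¹ * m * cmm a b)⁻¹ * a * ((cmm a b)⁻¹ * m * cmm a b))
        (((cmm a b)⁻¹ * m * cmm a b)⁻¹ * b * ((cmm a b)⁻¹ * m * cmm a b)) :=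
  toQuotient_eq_of_covRel (.rel5 m a b _)

theorem Yg_mul_Xg (m : {g : G // g ∈ O}) (a b : G) :
    Yg a b * Xg m = Xg m * Yg ((m : G)⁻¹ * a * m) ((m : G)⁻¹ * b * m) := by
  -- relation 2 for `m' = w m w⁻¹` reads `x_{m'} y_{a,b} = y_{a,b} x_m`; compare with relation 5
  set w := cmm a b
  let m' : {g : G // g ∈ O} := ⟨w⁻¹⁻¹ * m * w⁻¹, hO m m.2 _⟩
  have hm : w⁻¹ * m' * w = m := by simp [m', mul_assoc]
  have h2 := rel2 hO m' a b
  have h5 := rel5 hO m' a b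
  rw [Xg_congr (hy := m.2) hm] at h2 h5
  rw [← h2, h5, hm]

theorem exists_mul_Yg_eq_Yg_mul {t : CovS G O} (ht : t ∈ S G O) (a b : G) :
    ∃ t' ∈ S G O, t * Yg a b = Yg a b * t' := by
  induction ht using Subsemigroup.closure_induction with
  | mem _ hx =>
    obtain ⟨m, rfl⟩ := hx
    exact ⟨_, Xg_mem _, rel2 hO m a b⟩
  | mul x y _ _ ihx ihy =>
    obtain ⟨x', hx', ex⟩ := ihx
    obtain ⟨y', hy', ey⟩ := ihy
    exact ⟨x' * y', mul_mem hx' hy', by rw [mul_assoc, ey, ← mul_assoc, ex, mul_assoc]⟩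

theorem exists_Yg_mul_eq_mul_Yg {t : CovS G O} (ht : t ∈ S G O) (a b : G) :
    ∃ t' ∈ S G O, Yg a b * t = t' * Yg a b := by
  induction ht using Subsemigroup.closure_induction with
  | mem _ hx =>
    obtain ⟨m, rfl⟩ := hx
    refine ⟨_, Xg_mem ⟨cmm a b * m * (cmm a b)⁻¹, by simpa using hO m m.2 (cmm a b)⁻¹⟩, ?_⟩
    rw [rel2 hO]
    exact congrArg _ (Xg_congr (by group)).symm
  | mul x y _ _ ihx ihy =>
    obtain ⟨x', hx', ex⟩ := ihx
    obtain ⟨y', hy', ey⟩ := ihy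
    exact ⟨x' * y', mul_mem hx' hy', by rw [← mul_assoc, ex, mul_assoc, ey, mul_assoc]⟩

end Relations

variable (hO : ∀ g ∈ O, ∀ h : G, h⁻¹ * g * h ∈ O) (α : CovS G O →ₙ* G)

section Letters

variable (hαx : ∀ m, α (Xg m) = m)
include hO hαx

theorem Xg_mul_of_mem {t : CovS G O} (ht : t ∈ S G O) (m : {g : G // g ∈ O}) :
    Xg m * t = t * Xg ⟨(α t)⁻¹ * m * α t, hO m m.2 _⟩ := by
  induction ht using Subsemigroup.closure_induction generalizing m with
  | mem _ hx =>
    obtain ⟨c, rfl⟩ := hx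
    rw [rel1 hO m c]
    exact congrArg _ (Xg_congr (by rw [hαx]))
  | mul x y _ _ ihx ihy =>
    rw [← mul_assoc, ihx, mul_assoc, ihy, ← mul_assoc]
    exact congrArg _ (Xg_congr (by simp only [map_mul]; group))

theorem Yg_mul_of_mem {t : CovS G O} (ht : t ∈ S G O) (a b : G) :
    Yg a b * t = t * Yg ((α t)⁻¹ * a * α t) ((α t)⁻¹ * b * α t) := by
  induction ht using Subsemigroup.closure_induction generalizing a b with
  | mem _ hx =>
    obtain ⟨m, rfl⟩ := hx
    rw [Yg_mul_Xg hO, hαx]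
  | mul x y _ _ ihx ihy =>
    rw [← mul_assoc, ihx, mul_assoc, ihy, ← mul_assoc, map_mul]
    congr 2 <;> group

theorem commute_of_mem_of_map_eq_one {t : CovS G O} (ht : t ∈ S G O) (h1 : α t = 1)
    (d : CovS G O) : Commute t d := by
  induction d using induction_on with
  | hx m =>
    rw [commute_iff_eq, Xg_mul_of_mem hO α hαx ht, h1]
    exact congrArg _ (Xg_congr (by group))
  | hy a b =>
    rw [commute_iff_eq, Yg_mul_of_mem hO α hαx ht, h1]
    simp
  | hmul x y hx hy => exact hx.mul_right hy

theorem exists_mul_eq_mul_of_mem {r t : CovS G O} (hr : r ∈ S G O) (ht : t ∈ S G O) :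
    ∃ r' ∈ S G O, r * t = t * r' := by
  induction hr using Subsemigroup.closure_induction with
  | mem _ hx =>
    obtain ⟨m, rfl⟩ := hx
    exact ⟨_, Xg_mem _, Xg_mul_of_mem hO α hαx ht m⟩
  | mul x y _ _ ihx ihy =>
    obtain ⟨x', hx', ex⟩ := ihx
    obtain ⟨y', hy', ey⟩ := ihy
    exact ⟨x' * y', mul_mem hx' hy', by rw [mul_assoc, ey, ← mul_assoc, ex, mul_assoc]⟩

theorem exists_mul_Yg_eq_mul_Yg_map_mul {t : CovS G O} (ht : t ∈ S G O) (a b : G) :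
    ∃ t' ∈ S G O, t * Yg a b = t' * Yg (α t * a) b := by
  induction ht using Subsemigroup.closure_induction generalizing a with
  | mem _ hx =>
    obtain ⟨m, rfl⟩ := hx
    exact ⟨_, Xg_mem _, by rw [rel3 hO, hαx]⟩
  | mul x y _ _ ihx ihy =>
    obtain ⟨y₁, hy₁, ey₁⟩ := ihy a
    obtain ⟨y₂, hy₂, ey₂⟩ := exists_mul_Yg_eq_Yg_mul hO hy₁ (α y * a) b
    obtain ⟨x₁, hx₁, ex₁⟩ := ihx (α y * a)
    obtain ⟨y₃, hy₃, ey₃⟩ := exists_Yg_mul_eq_mul_Yg hO hy₂ (α x * (α y * a)) b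
    refine ⟨x₁ * y₃, mul_mem hx₁ hy₃, ?_⟩
    calc x * y * Yg a b = x * Yg (α y * a) b * y₂ := by rw [mul_assoc, ey₁, ey₂, mul_assoc]
      _ = x₁ * (Yg (α x * (α y * a)) b * y₂) := by rw [ex₁, mul_assoc]
      _ = x₁ * y₃ * Yg (α (x * y) * a) b := by rw [ey₃, map_mul, mul_assoc, mul_assoc]

theorem exists_Yg_mul_eq_Yg_inv_map_mul {t : CovS G O} (ht : t ∈ S G O) (a b : G) :
    ∃ t' ∈ S G O, Yg a b * t = Yg a ((α t)⁻¹ * b) * t' := by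
  induction ht using Subsemigroup.closure_induction generalizing b with
  | mem _ hx =>
    obtain ⟨m, rfl⟩ := hx
    exact ⟨_, Xg_mem _, by rw [rel4 hO, hαx]⟩
  | mul x y _ hy ihx ihy =>
    obtain ⟨x₁, hx₁, ex₁⟩ := ihx b
    obtain ⟨x₂, hx₂, ex₂⟩ := exists_mul_eq_mul_of_mem hO α hαx hx₁ hy
    obtain ⟨y₁, hy₁, ey₁⟩ := ihy ((α x)⁻¹ * b)
    refine ⟨y₁ * x₂, mul_mem hy₁ hx₂, ?_⟩
    calc Yg a b * (x * y) = Yg a ((α x)⁻¹ * b) * y * x₂ := by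
          rw [← mul_assoc, ex₁, mul_assoc, ex₂, mul_assoc]
      _ = Yg a ((α (x * y))⁻¹ * b) * (y₁ * x₂) := by
          rw [ey₁, map_mul, mul_inv_rev, mul_assoc, mul_assoc]

end Letters

def IsConjMove (h : G) (d : CovS G O) : Prop :=
  ∀ g (hg : g ∈ O) s, s ∈ S G O → α s = g⁻¹ →
    ∃ z ∈ S G O, Xg ⟨g, hg⟩ * s * d = Xg ⟨h⁻¹ * g * h, hO g hg h⟩ * z * d

def IsConjReachable {X : Type*} (E : CovS G O → X) (h : G) : Prop :=
  ∀ g (hg : g ∈ O) s, s ∈ S G O → α s = g⁻¹ →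
    ∃ z ∈ S G O, α z = (h⁻¹ * g * h)⁻¹ ∧
      E (Xg ⟨g, hg⟩ * s) = E (Xg ⟨h⁻¹ * g * h, hO g hg h⟩ * z)

section Reachable

variable {X : Type*} {E : CovS G O → X}

theorem isConjReachable_one : IsConjReachable hO α E 1 := by
  intro g hg s hs hαs
  refine ⟨s, hs, by rw [hαs]; group, ?_⟩
  congr 3; group

variable {hO α}

theorem IsConjReachable.mul {h₁ h₂ : G} (H₁ : IsConjReachable hO α E h₁)
    (H₂ : IsConjReachable hO α E h₂) : IsConjReachable hO α E (h₁ * h₂) := by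
  intro g hg s hs hαs
  obtain ⟨z₁, hz₁, hαz₁, e₁⟩ := H₁ g hg s hs hαs
  obtain ⟨z₂, hz₂, hαz₂, e₂⟩ := H₂ _ _ z₁ hz₁ hαz₁
  refine ⟨z₂, hz₂, by rw [hαz₂]; group, ?_⟩
  rw [e₁, e₂]; congr 3; group

theorem IsConjReachable.pow {h : G} (H : IsConjReachable hO α E h) (n : ℕ) :
    IsConjReachable hO α E (h ^ n) := by
  induction n with
  | zero => exact pow_zero h ▸ isConjReachable_one hO α
  | succ n ih => exact pow_succ h n ▸ ih.mul H

theorem IsConjReachable.congr {h h' : G} (hh' : ∀ x ∈ O, h⁻¹ * x * h = h'⁻¹ * x * h')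
    (H : IsConjReachable hO α E h) : IsConjReachable hO α E h' := by
  intro g hg s hs hαs
  obtain ⟨z, hz, hαz, e⟩ := H g hg s hs hαs
  exact ⟨z, hz, hh' g hg ▸ hαz, by rw [e]; congr 3; exact Subtype.ext (hh' g hg)⟩

end Reachable

def conjReachSubgroup (hOfin : O.Finite) {X : Type*} (E : CovS G O → X) : Subgroup G where
  carrier := {h | IsConjReachable hO α E h}
  one_mem' := isConjReachable_one hO α
  mul_mem' := IsConjReachable.mul
  inv_mem' {h} H := by
    obtain ⟨n, hn⟩ := exists_pow_conj_eq_conj_inv hOfin hO h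
    exact (IsConjReachable.pow H n).congr fun x hx => by rw [hn x hx, inv_inv]

variable (hαx : ∀ m, α (Xg m) = m)
include hO hαx

theorem mul_eq_mul_of_mul_eq_mul_comm {B B' d : CovS G O} (hB : α B = 1) (hB' : B' ∈ S G O)
    (h : B * d = d * B') : B * d = B' * d := by
  have hαB' : α B' = 1 := by
    simpa [hB] using congrArg α h
  rw [h, (commute_of_mem_of_map_eq_one hO α hαx hB' hαB' d).eq]

theorem IsConjMove.isConjReachable {X : Type*} {E : CovS G O → X} {h : G} {d : CovS G O}
    (hmove : IsConjMove hO α h d)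
    (hE : ∀ B B', (∀ x, Commute B x) → (∀ x, Commute B' x) → B * d = B' * d → E B = E B') :
    IsConjReachable hO α E h := by
  intro g hg s hs hαs
  obtain ⟨z, hz, e⟩ := hmove g hg s hs hαs
  have hαz : α z = (h⁻¹ * g * h)⁻¹ := by
    have := congrArg α e
    simp only [map_mul, hαx, hαs, mul_inv_cancel, one_mul] at this
    exact eq_inv_of_mul_eq_one_right (mul_eq_right.1 this.symm)
  have central {g' : G} (hg' : g' ∈ O) {s'} (hs' : s' ∈ S G O) (hαs' : α s' = g'⁻¹) (x) :
      Commute (Xg ⟨g', hg'⟩ * s') x :=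
    commute_of_mem_of_map_eq_one hO α hαx (mul_mem (Xg_mem _) hs')
      (by rw [map_mul, hαx, hαs', mul_inv_cancel]) x
  exact ⟨z, hz, hαz, hE _ _ (central hg hs hαs) (central _ hz hαz) e⟩

theorem isConjMove_Xg (c : {g : G // g ∈ O}) : IsConjMove hO α c (Xg c) := by
  intro g hg s hs hαs
  obtain ⟨s', hs', es⟩ := exists_mul_eq_mul_of_mem hO α hαx hs (Xg_mem c)
  refine ⟨s', hs', mul_eq_mul_of_mul_eq_mul_comm hO α hαx ?_ (mul_mem (Xg_mem _) hs') ?_⟩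
  · rw [map_mul, hαx, hαs, mul_inv_cancel]
  · rw [mul_assoc, es, ← mul_assoc, rel1 hO, mul_assoc]

theorem isConjMove_cmm (a b : G) : IsConjMove hO α (cmm a b) (Yg a b) := by
  intro g hg s hs hαs
  obtain ⟨s', hs', es⟩ := exists_mul_Yg_eq_Yg_mul hO hs a b
  refine ⟨s', hs', mul_eq_mul_of_mul_eq_mul_comm hO α hαx ?_ (mul_mem (Xg_mem _) hs') ?_⟩
  · rw [map_mul, hαx, hαs, mul_inv_cancel]
  · rw [mul_assoc, es, ← mul_assoc, rel2 hO, mul_assoc]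

theorem isConjMove_Yg_left (a b : G) : IsConjMove hO α (a * b⁻¹ * a⁻¹) (Yg a b) := by
  intro g hg s hs hαs
  obtain ⟨s₁, hs₁, e₁⟩ := exists_mul_Yg_eq_mul_Yg_map_mul hO α hαx hs a b
  obtain ⟨s₂, hs₂, e₂⟩ := exists_mul_Yg_eq_Yg_mul hO hs₁ (g⁻¹ * a) b
  obtain ⟨s₃, hs₃, e₃⟩ := exists_Yg_mul_eq_mul_Yg hO hs₂ a b
  refine ⟨s₃, hs₃, ?_⟩
  calc Xg ⟨g, hg⟩ * s * Yg a b = Xg ⟨g, hg⟩ * Yg (g⁻¹ * a) b * s₂ := by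
        rw [mul_assoc, e₁, hαs, e₂, mul_assoc]
    _ = Xg ⟨(a * b⁻¹ * a⁻¹)⁻¹ * g * (a * b⁻¹ * a⁻¹), hO g hg _⟩ * (Yg a b * s₂) := by
        rw [rel3 hO, mul_inv_cancel_left, mul_assoc]
        congr 3
        group
    _ = _ := by rw [e₃, ← mul_assoc]

theorem isConjMove_Yg_right (a b : G) : IsConjMove hO α (b * a⁻¹ * b⁻¹) (Yg a b) := by
  intro g hg s hs hαs
  have hB : α (Xg ⟨g, hg⟩ * s) = 1 := by rw [map_mul, hαx, hαs, mul_inv_cancel]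
  obtain ⟨s₁, hs₁, e₁⟩ := exists_Yg_mul_eq_Yg_inv_map_mul hO α hαx hs a (g⁻¹ * b)
  set g' : {g : G // g ∈ O} := ⟨(b * a⁻¹ * b⁻¹)⁻¹ * g * (b * a⁻¹ * b⁻¹), hO g hg _⟩
  obtain ⟨s₂, hs₂, e₂⟩ := exists_mul_eq_mul_of_mem hO α hαx hs₁ (Xg_mem g')
  refine ⟨s₂, hs₂, mul_eq_mul_of_mul_eq_mul_comm hO α hαx hB (mul_mem (Xg_mem _) hs₂) ?_⟩
  calc Xg ⟨g, hg⟩ * s * Yg a b = Yg a b * Xg ⟨g, hg⟩ * s := by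
        rw [(commute_of_mem_of_map_eq_one hO α hαx (mul_mem (Xg_mem _) hs) hB _).eq, mul_assoc]
    _ = Yg a (g⁻¹ * b) * (s * Xg g') := by
        rw [rel4 hO, mul_assoc, Xg_mul_of_mem hO α hαx hs, hαs]
        congr 3
        simp only [g']
        group
    _ = Yg a b * (Xg g' * s₂) := by
        rw [← mul_assoc, e₁, hαs, inv_inv, mul_inv_cancel_left, mul_assoc, e₂]

theorem mem_conjReachSubgroup_of_Yg (hOfin : O.Finite) {X : Type*} {E : CovS G O → X} {a b : G}
    (hE : ∀ B B', (∀ x, Commute B x) → (∀ x, Commute B' x) →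
      B * Yg a b = B' * Yg a b → E B = E B') :
    a ∈ conjReachSubgroup hO α hOfin E ∧ b ∈ conjReachSubgroup hO α hOfin E := by
  set K := conjReachSubgroup hO α hOfin E
  have hw : cmm a b ∈ K := (isConjMove_cmm hO α hαx a b).isConjReachable hO α hαx hE
  have hu : a * b⁻¹ * a⁻¹ ∈ K := (isConjMove_Yg_left hO α hαx a b).isConjReachable hO α hαx hE
  have hv : b * a⁻¹ * b⁻¹ ∈ K := (isConjMove_Yg_right hO α hαx a b).isConjReachable hO α hαx hE
  have ha : a = cmm a b * (b * a⁻¹ * b⁻¹)⁻¹ := by simp only [cmm]; group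
  have hb : b = (cmm a b)⁻¹ * (a * b⁻¹ * a⁻¹)⁻¹ := by simp only [cmm]; group
  constructor
  · rw [ha]
    exact mul_mem hw (inv_mem hv)
  · rw [hb]
    exact mul_mem (inv_mem hw) (inv_mem hu)

end CovS

theorem stmt17_general (G : Type) [Group G] (O : Set G)
    (hOfin : O.Finite)
    (hO : ∀ g ∈ O, ∀ h : G, h⁻¹ * g * h ∈ O)
    (α : CovS G O →ₙ* G)
    (hαx : ∀ g : {g : G // g ∈ O}, α (Xg g) = (g : G))
    (lst : List {g : G // g ∈ O}) (pairs : List (G × G))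
    (g : G) (hg : g ∈ O) (h : G)
    (hh : h ∈ Subgroup.closure
      ({x : G | x ∈ lst.map Subtype.val} ∪
        {x : G | ∃ p ∈ pairs, x = p.1 ∨ x = p.2}))
    (s : CovS G O)
    (hs : s ∈ Subsemigroup.closure (Set.range (Xg : {g : G // g ∈ O} → CovS G O)))
    (hαs : α s = g⁻¹) :
    ∃ z ∈ Subsemigroup.closure (Set.range (Xg : {g : G // g ∈ O} → CovS G O)),
      lst.foldr (fun x acc => Xg x * acc)
          (pairs.foldl (fun acc p => acc * Yg p.1 p.2) (Xg ⟨g, hg⟩ * s)) =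
        lst.foldr (fun x acc => Xg x * acc)
          (pairs.foldl (fun acc p => acc * Yg p.1 p.2)
            (Xg ⟨h⁻¹ * g * h, hO g hg h⟩ * z)) := by
  set E := fun B => lst.foldr (fun x acc => Xg x * acc)
    (pairs.foldl (fun acc p => acc * Yg p.1 p.2) B)
  have hE {d} (hd : d ∈ lst.map Xg ++ pairs.map fun p => Yg p.1 p.2) (B B' : CovS G O)
      (hB : ∀ x, Commute B x) (hB' : ∀ x, Commute B' x) (e : B * d = B' * d) : E B = E B' :=
    foldr_foldl_eq_of_mul_eq _ _ _ _ hB hB' e hd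
  have hgen : {x : G | x ∈ lst.map Subtype.val} ∪ {x : G | ∃ p ∈ pairs, x = p.1 ∨ x = p.2} ⊆
      CovS.conjReachSubgroup hO α hOfin E := by
    rintro x (hx | ⟨p, hp, hx⟩)
    · obtain ⟨c, hc, rfl⟩ := List.mem_map.1 hx
      exact (CovS.isConjMove_Xg hO α hαx c).isConjReachable hO α hαx
        (hE (List.mem_append_left _ (List.mem_map_of_mem hc)))
    · have hab := CovS.mem_conjReachSubgroup_of_Yg hO α hαx hOfin
        (hE (List.mem_append_right _ (List.mem_map_of_mem (f := fun p => Yg p.1 p.2) hp)))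
      rcases hx with rfl | rfl
      exacts [hab.1, hab.2]
  obtain ⟨z, hz, -, e⟩ := (Subgroup.closure_le _).2 hgen hh g hg s hs hαs
  exact ⟨z, hz, e⟩

theorem stmt17 (G : Type) [Group G] (O : Set G) (h1 : (1 : G) ∉ O)
    (hOfin : O.Finite)
    (hO : ∀ g ∈ O, ∀ h : G, h⁻¹ * g * h ∈ O)
    (α : CovS G O →ₙ* G)
    (hαx : ∀ g : {g : G // g ∈ O}, α (Xg g) = (g : G))
    (hαy : ∀ a b : G, α (Yg a b) = a * b * a⁻¹ * b⁻¹)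
    (lst : List {g : G // g ∈ O}) (pairs : List (G × G))
    (g : G) (hg : g ∈ O) (h : G)
    (hh : h ∈ Subgroup.closure
      ({x : G | x ∈ lst.map Subtype.val} ∪
        {x : G | ∃ p ∈ pairs, x = p.1 ∨ x = p.2}))
    (s : CovS G O)
    (hs : s ∈ Subsemigroup.closure (Set.range (Xg : {g : G // g ∈ O} → CovS G O)))
    (hαs : α s = g⁻¹) :
    ∃ z ∈ Subsemigroup.closure (Set.range (Xg : {g : G // g ∈ O} → CovS G O)),
      lst.foldr (fun x acc => Xg x * acc)
          (pairs.foldl (fun acc p => acc * Yg p.1 p.2) (Xg ⟨g, hg⟩ * s)) =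
        lst.foldr (fun x acc => Xg x * acc)
          (pairs.foldl (fun acc p => acc * Yg p.1 p.2)
            (Xg ⟨h⁻¹ * g * h, hO g hg h⟩ * z)) :=
  stmt17_general G O hOfin hO α hαx lst pairs g hg h hh s hs hαs
end
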